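/- Let H be a real symmetric positive-definite n×n matrix, μ > 0, m ≥ 0, and let Ω ⊆ ℝ^n be an open convex set. Let B : Ω → ℝ be differentiable with ⟨∇B(x) − ∇B(y), x − y⟩ ≥ m‖x − y‖² for all x, y ∈ Ω. Fix θ_x, θ_y ∈ ℝ^n and suppose U_x ∈ Ω minimizes u ↦ (1/2)⟨u, Hu⟩ − ⟨θ_x, u⟩ + μB(u) over Ω and U_y ∈ Ω minimizes u ↦ (1/2)⟨u, Hu⟩ − ⟨θ_y, u⟩ + μB(u) over Ω. Then ⟨U_x − U_y, (H + μmI)(U_x − U_y)⟩ ≤ ⟨U_x − U_y, θ_x − θ_y⟩; that is, the barrier-MPC map is slope-restricted on [0, (H + μmI)^{-1}]. -/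

import Mathlib

open RealInnerProductSpace Matrix

/-!
At an interior minimizer the gradient of the cost vanishes: `H U - θ + μ ∇B(U) = 0`.
Subtracting the two optimality conditions gives `θx - θy = H d + μ (∇B(Ux) - ∇B(Uy))` with
`d = Ux - Uy`; pairing with `d` and using strong monotonicity of `∇B` yields the claim.
-/

section
variable {E : Type*} [NormedAddCommGroup E] [InnerProductSpace ℝ E]

theorem LinearMap.IsSymmetric.hasFDerivAt_half_inner_self {T : E →L[ℝ] E}
    (hT : (T : E →ₗ[ℝ] E).IsSymmetric) (p : E) :
    HasFDerivAt (fun u => 1 / 2 * ⟪u, T u⟫) (innerSL ℝ (T p)) p := by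
  have hquad : (fun u => 1 / 2 * ⟪u, T u⟫) = fun u => 1 / 2 * T.reApplyInnerSelf u := by
    funext u
    rw [ContinuousLinearMap.reApplyInnerSelf_apply, real_inner_comm]
    rfl
  rw [hquad]
  refine ((hT.hasStrictFDerivAt_reApplyInnerSelf p).hasFDerivAt.const_mul (1 / 2)).congr_fderiv ?_
  module

noncomputable def barrierMPCCost (T : E →L[ℝ] E) (μ : ℝ) (B : E → ℝ) (θ u : E) : ℝ :=
  1 / 2 * ⟪u, T u⟫ - ⟪θ, u⟫ + μ * B u

variable [CompleteSpace E]

theorem hasGradientAt_barrierMPCCost {T : E →L[ℝ] E} (hT : (T : E →ₗ[ℝ] E).IsSymmetric)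
    (μ : ℝ) {B : E → ℝ} (θ : E) {p : E} (hB : DifferentiableAt ℝ B p) :
    HasGradientAt (barrierMPCCost T μ B θ) (T p - θ + μ • gradient B p) p := by
  rw [hasGradientAt_iff_hasFDerivAt, map_add, map_sub, map_smul, toDual_gradient]
  exact ((hT.hasFDerivAt_half_inner_self p).sub (innerSL ℝ θ).hasFDerivAt).add
    (hB.hasFDerivAt.const_mul μ)

theorem IsLocalMin.hasGradientAt_eq_zero {f : E → ℝ} {f' a : E} (h : IsLocalMin f a)
    (hf : HasGradientAt f f' a) : f' = 0 :=
  (InnerProductSpace.toDual ℝ E).map_eq_zero_iff.mp (h.hasFDerivAt_eq_zero hf.hasFDerivAt)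

theorem barrierMPCCost_optimality {T : E →L[ℝ] E} (hT : (T : E →ₗ[ℝ] E).IsSymmetric)
    {μ : ℝ} {B : E → ℝ} {θ p : E} {Ω : Set E} (hΩ : IsOpen Ω) (hp : p ∈ Ω)
    (hB : DifferentiableAt ℝ B p) (hmin : IsMinOn (barrierMPCCost T μ B θ) Ω p) :
    T p - θ + μ • gradient B p = 0 :=
  (hmin.isLocalMin (hΩ.mem_nhds hp)).hasGradientAt_eq_zero
    (hasGradientAt_barrierMPCCost hT μ θ hB)

end

theorem inner_apply_add_mul_norm_sq_le_of_optimality {E : Type*} [NormedAddCommGroup E]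
    [InnerProductSpace ℝ E] (T : E →ₗ[ℝ] E) {μ m : ℝ} (hμ : 0 ≤ μ) {θx θy p q gx gy : E}
    (hp : T p - θx + μ • gx = 0) (hq : T q - θy + μ • gy = 0)
    (hmono : m * ‖p - q‖ ^ 2 ≤ ⟪gx - gy, p - q⟫) :
    ⟪p - q, T (p - q)⟫ + μ * m * ‖p - q‖ ^ 2 ≤ ⟪p - q, θx - θy⟫ := by
  have hθ : θx - θy = T (p - q) + μ • (gx - gy) := by
    have h : θx - θy - (T (p - q) + μ • (gx - gy)) =
        -((T p - θx + μ • gx) - (T q - θy + μ • gy)) := by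
      rw [map_sub, smul_sub]; abel
    rwa [hp, hq, sub_zero, neg_zero, sub_eq_zero] at h
  rw [hθ, inner_add_right, real_inner_smul_right, real_inner_comm (gx - gy), mul_assoc]
  gcongr

theorem barrierMPC_slope_restricted {n : ℕ}
    (H : Matrix (Fin n) (Fin n) ℝ) (hHsym : H.IsSymm)
    (μ m : ℝ) (hμ : 0 < μ)
    (Ω : Set (EuclideanSpace ℝ (Fin n))) (hΩopen : IsOpen Ω)
    (B : EuclideanSpace ℝ (Fin n) → ℝ)
    (hBdiff : ∀ u ∈ Ω, DifferentiableAt ℝ B u)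
    (hBmono : ∀ x ∈ Ω, ∀ y ∈ Ω,
      m * ‖x - y‖ ^ 2 ≤ ⟪gradient B x - gradient B y, x - y⟫)
    (θx θy Ux Uy : EuclideanSpace ℝ (Fin n)) (hUx : Ux ∈ Ω) (hUy : Uy ∈ Ω)
    (hminx : ∀ u ∈ Ω,
      (1 / 2) * ⟪Ux, Matrix.toEuclideanLin H Ux⟫ - ⟪θx, Ux⟫ + μ * B Ux ≤
        (1 / 2) * ⟪u, Matrix.toEuclideanLin H u⟫ - ⟪θx, u⟫ + μ * B u)
    (hminy : ∀ u ∈ Ω,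
      (1 / 2) * ⟪Uy, Matrix.toEuclideanLin H Uy⟫ - ⟪θy, Uy⟫ + μ * B Uy ≤
        (1 / 2) * ⟪u, Matrix.toEuclideanLin H u⟫ - ⟪θy, u⟫ + μ * B u) :
    ⟪Ux - Uy, Matrix.toEuclideanLin
        (H + (μ * m) • (1 : Matrix (Fin n) (Fin n) ℝ)) (Ux - Uy)⟫ ≤
      ⟪Ux - Uy, θx - θy⟫ := by
  set T := LinearMap.toContinuousLinearMap (Matrix.toEuclideanLin H)
  have hT : (T : EuclideanSpace ℝ (Fin n) →ₗ[ℝ] _).IsSymmetric :=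
    isSymmetric_toEuclideanLin_iff.mpr (isHermitian_iff_isSymm.mpr hHsym)
  have hoptx := barrierMPCCost_optimality hT hΩopen hUx (hBdiff Ux hUx) (isMinOn_iff.mpr hminx)
  have hopty := barrierMPCCost_optimality hT hΩopen hUy (hBdiff Uy hUy) (isMinOn_iff.mpr hminy)
  have hshift (v : EuclideanSpace ℝ (Fin n)) :
      Matrix.toEuclideanLin (H + (μ * m) • 1) v = Matrix.toEuclideanLin H v + (μ * m) • v := by
    simp
  rw [hshift, inner_add_right, real_inner_smul_right, real_inner_self_eq_norm_sq]
  exact inner_apply_add_mul_norm_sq_le_of_optimality (Matrix.toEuclideanLin H) hμ.le hoptx hopty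
    (hBmono Ux hUx Uy hUy)
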